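/- In the finite one-dimensional screening problem, fix any allocation vector x ∈ X^n. Then the transfer program — maximize Σ_i μ(θ_i) t_i over t ∈ ℝ^n subject to all downward IC constraints and all IR constraints (given x) — has a feasible point, and it admits a unique optimal solution. -/

import Mathlib

open Finset

noncomputable section

/-- Feasibility of a transfer vector `t` for a fixed allocation `x`: all downward IC
constraints and all IR constraints. Indices run over `0, …, n-1`. -/
def TFeas (n : ℕ) (u : ℝ → ℝ → ℝ) (θ : ℕ → ℝ) (x t : ℕ → ℝ) : Prop :=
  (∀ i j, j < i → i < n → u (x i) (θ i) - t i ≥ u (x j) (θ i) - t j) ∧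
    (∀ i, i < n → u (x i) (θ i) - t i ≥ 0)

/-! Writing `W i = u (x i) (θ i) - t i` for the rent of type `i`, the program asks for the
largest transfers, i.e. the smallest rents with `0 ≤ W i` and `W k + g k i ≤ W i` for
`k < i`, where `g k i` is what type `i` gains over type `k` from `k`'s allocation. These
constraints only point upwards, so the smallest rents are computed by a forward recursion
and are pointwise below every feasible rent vector; positive weights then make the
resulting transfers the unique optimum. -/

def minRent (g : ℕ → ℕ → ℝ) (i : ℕ) : ℝ :=
  (range i).attach.fold max 0 fun k => minRent g k.1 + g k.1 i
termination_by i
decreasing_by exact mem_range.1 k.2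

lemma minRent_nonneg (g : ℕ → ℕ → ℝ) (i : ℕ) : 0 ≤ minRent g i := by
  rw [minRent]
  exact (le_fold_max _).2 (Or.inl le_rfl)

lemma minRent_add_le (g : ℕ → ℕ → ℝ) {k i : ℕ} (hki : k < i) :
    minRent g k + g k i ≤ minRent g i := by
  conv_rhs => rw [minRent]
  exact (le_fold_max _).2 (Or.inr ⟨⟨k, mem_range.2 hki⟩, mem_attach _ _, le_rfl⟩)

lemma minRent_le (g : ℕ → ℕ → ℝ) {n : ℕ} {W : ℕ → ℝ} (hW0 : ∀ i < n, 0 ≤ W i)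
    (hW : ∀ k i, k < i → i < n → W k + g k i ≤ W i) : ∀ i < n, minRent g i ≤ W i := by
  intro i
  induction i using Nat.strong_induction_on with
  | _ i ih =>
    intro hin
    rw [minRent]
    refine (fold_max_le _).2 ⟨hW0 i hin, fun ⟨k, hk⟩ _ => ?_⟩
    have hki := mem_range.1 hk
    linarith [ih k hki (hki.trans hin), hW k i hki hin]

def mimicGain (u : ℝ → ℝ → ℝ) (θ x : ℕ → ℝ) (k i : ℕ) : ℝ :=
  u (x k) (θ i) - u (x k) (θ k)

lemma tFeas_iff_rent {n : ℕ} {u : ℝ → ℝ → ℝ} {θ x t : ℕ → ℝ} :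
    TFeas n u θ x t ↔
      (∀ i < n, 0 ≤ u (x i) (θ i) - t i) ∧
        ∀ k i, k < i → i < n → (u (x k) (θ k) - t k) + mimicGain u θ x k i ≤
          u (x i) (θ i) - t i := by
  unfold TFeas mimicGain
  constructor
  · rintro ⟨hIC, hIR⟩
    exact ⟨hIR, fun k i hki hin => by linarith [hIC i k hki hin]⟩
  · rintro ⟨hIR, hIC⟩
    exact ⟨fun i k hki hin => by linarith [hIC k i hki hin], hIR⟩

def optTransfer (u : ℝ → ℝ → ℝ) (θ x : ℕ → ℝ) (i : ℕ) : ℝ :=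
  u (x i) (θ i) - minRent (mimicGain u θ x) i

lemma tFeas_optTransfer (n : ℕ) (u : ℝ → ℝ → ℝ) (θ x : ℕ → ℝ) :
    TFeas n u θ x (optTransfer u θ x) := by
  refine tFeas_iff_rent.2 ⟨fun i _ => ?_, fun k i hki _ => ?_⟩
  · simpa [optTransfer] using minRent_nonneg (mimicGain u θ x) i
  · simpa [optTransfer] using minRent_add_le (mimicGain u θ x) hki

lemma le_optTransfer {n : ℕ} {u : ℝ → ℝ → ℝ} {θ x t : ℕ → ℝ} (ht : TFeas n u θ x t) :
    ∀ i < n, t i ≤ optTransfer u θ x i := by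
  obtain ⟨hIR, hIC⟩ := tFeas_iff_rent.1 ht
  intro i hin
  have := minRent_le (mimicGain u θ x) hIR hIC i hin
  unfold optTransfer
  linarith

lemma weightedSum_le_of_le {ι : Type*} {s : Finset ι} {μ a b : ι → ℝ}
    (hμ : ∀ i ∈ s, 0 ≤ μ i) (hab : ∀ i ∈ s, a i ≤ b i) :
    ∑ i ∈ s, μ i * a i ≤ ∑ i ∈ s, μ i * b i :=
  sum_le_sum fun i hi => mul_le_mul_of_nonneg_left (hab i hi) (hμ i hi)

lemma eq_of_le_of_weightedSum_le {ι : Type*} {s : Finset ι} {μ a b : ι → ℝ}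
    (hμ : ∀ i ∈ s, 0 < μ i) (hab : ∀ i ∈ s, a i ≤ b i)
    (hsum : ∑ i ∈ s, μ i * b i ≤ ∑ i ∈ s, μ i * a i) : ∀ i ∈ s, a i = b i := by
  have hle := weightedSum_le_of_le (fun i hi => (hμ i hi).le) hab
  have hterm := (sum_eq_sum_iff_of_le fun i hi =>
    mul_le_mul_of_nonneg_left (hab i hi) (hμ i hi).le).1 (le_antisymm hle hsum)
  exact fun i hi => mul_left_cancel₀ (hμ i hi).ne' (hterm i hi)

theorem stmt5
    (n : ℕ)
    (θ μ : ℕ → ℝ)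
    (hμpos : ∀ i, i < n → 0 < μ i)
    (u : ℝ → ℝ → ℝ)
    (x : ℕ → ℝ) :
    (∃ t : ℕ → ℝ, TFeas n u θ x t) ∧
    (∃ t : ℕ → ℝ, TFeas n u θ x t ∧
      (∀ t' : ℕ → ℝ, TFeas n u θ x t' →
        ∑ i ∈ range n, μ i * t' i ≤ ∑ i ∈ range n, μ i * t i) ∧
      (∀ t' : ℕ → ℝ, TFeas n u θ x t' →
        (∀ t'' : ℕ → ℝ, TFeas n u θ x t'' →
          ∑ i ∈ range n, μ i * t'' i ≤ ∑ i ∈ range n, μ i * t' i) →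
        ∀ i, i < n → t' i = t i)) := by
  have hμ : ∀ i ∈ range n, 0 < μ i := fun i hi => hμpos i (mem_range.1 hi)
  have hfeas := tFeas_optTransfer n u θ x
  have hle : ∀ t, TFeas n u θ x t → ∀ i ∈ range n, t i ≤ optTransfer u θ x i :=
    fun t ht i hi => le_optTransfer ht i (mem_range.1 hi)
  refine ⟨⟨_, hfeas⟩, _, hfeas, fun t ht => ?_, fun t ht hopt i hin => ?_⟩
  · exact weightedSum_le_of_le (fun i hi => (hμ i hi).le) (hle t ht)
  · exact eq_of_le_of_weightedSum_le hμ (hle t ht) (hopt _ hfeas) i (mem_range.2 hin)
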